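/- Let a < b and let N₀ : [a,b] → ℝ^{n×m}, N₁, N₂ : [a,b]² → ℝ^{n×m} be continuous matrix-valued functions. Then for all y ∈ L²([a,b], ℝ^m) and g ∈ L²([a,b], ℝ^n), ⟨P_{N₀,N₁,N₂} y, g⟩_{L²} = ⟨y, P_{N̂₀,N̂₁,N̂₂} g⟩_{L²}, where N̂₀(s) = N₀(s)ᵀ, N̂₁(s,θ) = N₂(θ,s)ᵀ and N̂₂(s,θ) = N₁(θ,s)ᵀ. That is, the adjoint of a 3-PI operator with respect to the L² inner product is the 3-PI operator with these transposed and reflected parameters. -/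

import Mathlib

open MeasureTheory Set Matrix
open scoped RealInnerProductSpace

/-!
The multiplication part is adjoint pointwise: `⟪N₀ y, g⟫ = ⟪y, N₀ᵀ g⟫`. The two integral parts are
Volterra operators. Pairing `∫_a^s N₁(s,θ) y(θ) dθ` with `g(s)` and integrating over `s` gives the
integral of `⟪N₁(s,θ) y(θ), g(s)⟫` over the triangle `θ ≤ s`; Fubini on the triangle rewrites it as
`∫_a^b ⟪y(θ), ∫_θ^b N₁(s,θ)ᵀ g(s) ds⟫ dθ`. So the adjoint of a lower Volterra operator is the
upper one with the reflected, adjoint kernel, and vice versa. Fubini applies because a continuous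
kernel is bounded on the compact square and `L²([a,b]) ⊆ L¹([a,b])`.
-/

/-- Matrix–vector multiplication, viewed as a map between Euclidean spaces. -/
def mulVecE {n m : ℕ} (M : Matrix (Fin n) (Fin m) ℝ) (v : EuclideanSpace ℝ (Fin m)) :
    EuclideanSpace ℝ (Fin n) := WithLp.toLp 2 (M.mulVec v)

/-- The 3-PI operator `P_{N₀,N₁,N₂}`, applied pointwise:
`(P_{N₀,N₁,N₂} y)(s) = N₀(s) y(s) + ∫_a^s N₁(s,θ) y(θ) dθ + ∫_s^b N₂(s,θ) y(θ) dθ`. -/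
noncomputable def threePI {n m : ℕ} (a b : ℝ)
    (N₀ : ℝ → Matrix (Fin n) (Fin m) ℝ)
    (N₁ N₂ : ℝ → ℝ → Matrix (Fin n) (Fin m) ℝ)
    (y : ℝ → EuclideanSpace ℝ (Fin m)) (s : ℝ) : EuclideanSpace ℝ (Fin n) :=
  mulVecE (N₀ s) (y s) + (∫ θ in a..s, mulVecE (N₁ s θ) (y θ))
    + ∫ θ in s..b, mulVecE (N₂ s θ) (y θ)

open Function (uncurry)

section TriangleFubini

variable {E : Type*} [NormedAddCommGroup E] {a b : ℝ} {F : ℝ → ℝ → E}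

lemma integrable_indicator_lowerTriangle (hF : IntegrableOn (uncurry F) (Ioc a b ×ˢ Ioc a b)) :
    Integrable ({z : ℝ × ℝ | z.2 ≤ z.1}.indicator (uncurry F))
      ((volume.restrict (Ioc a b)).prod (volume.restrict (Ioc a b))) := by
  rw [Measure.prod_restrict, ← Measure.volume_eq_prod]
  exact Integrable.indicator hF (measurableSet_le measurable_snd measurable_fst)

variable [NormedSpace ℝ E]

lemma intervalIntegral_lower_eq_integral_indicator {s : ℝ} (hs : s ∈ Ioc a b) :
    ∫ θ in a..s, F s θ = ∫ θ in Ioc a b, {z : ℝ × ℝ | z.2 ≤ z.1}.indicator (uncurry F) (s, θ) := by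
  have hslice : (fun θ => {z : ℝ × ℝ | z.2 ≤ z.1}.indicator (uncurry F) (s, θ))
      = (Iic s).indicator (F s) := by
    ext θ; simp [indicator_apply]
  rw [hslice, setIntegral_indicator measurableSet_Iic, Ioc_inter_Iic, inf_eq_right.2 hs.2,
    intervalIntegral.integral_of_le hs.1.le]

lemma intervalIntegral_upper_eq_integral_indicator {θ : ℝ} (hθ : θ ∈ Ioc a b) :
    ∫ s in θ..b, F s θ = ∫ s in Ioc a b, {z : ℝ × ℝ | z.2 ≤ z.1}.indicator (uncurry F) (s, θ) := by
  have hslice : (fun s => {z : ℝ × ℝ | z.2 ≤ z.1}.indicator (uncurry F) (s, θ))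
      = (Ici θ).indicator (F · θ) := by
    ext s; simp [indicator_apply]
  have hsection : Ioc a b ∩ Ici θ = Icc θ b := by
    ext s
    exact ⟨fun ⟨⟨_, hsb⟩, hθs⟩ => ⟨hθs, hsb⟩, fun ⟨hθs, hsb⟩ => ⟨⟨hθ.1.trans_le hθs, hsb⟩, hθs⟩⟩
  rw [hslice, setIntegral_indicator measurableSet_Ici, hsection, integral_Icc_eq_integral_Ioc,
    intervalIntegral.integral_of_le hθ.2]

lemma intervalIntegrable_intervalIntegral_lower (hab : a ≤ b)
    (hF : IntegrableOn (uncurry F) (Ioc a b ×ˢ Ioc a b)) :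
    IntervalIntegrable (fun s => ∫ θ in a..s, F s θ) volume a b := by
  rw [intervalIntegrable_iff_integrableOn_Ioc_of_le hab]
  exact (integrable_indicator_lowerTriangle hF).integral_prod_left.congr <|
    (ae_restrict_mem measurableSet_Ioc).mono fun s hs =>
      (intervalIntegral_lower_eq_integral_indicator hs).symm

lemma intervalIntegrable_intervalIntegral_upper (hab : a ≤ b)
    (hF : IntegrableOn (uncurry F) (Ioc a b ×ˢ Ioc a b)) :
    IntervalIntegrable (fun θ => ∫ s in θ..b, F s θ) volume a b := by
  rw [intervalIntegrable_iff_integrableOn_Ioc_of_le hab]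
  exact (integrable_indicator_lowerTriangle hF).integral_prod_right.congr <|
    (ae_restrict_mem measurableSet_Ioc).mono fun θ hθ =>
      (intervalIntegral_upper_eq_integral_indicator hθ).symm

theorem intervalIntegral_integral_swap_triangle (hab : a ≤ b)
    (hF : IntegrableOn (uncurry F) (Ioc a b ×ˢ Ioc a b)) :
    ∫ s in a..b, ∫ θ in a..s, F s θ = ∫ θ in a..b, ∫ s in θ..b, F s θ := by
  rw [intervalIntegral.integral_of_le hab, intervalIntegral.integral_of_le hab,
    setIntegral_congr_fun measurableSet_Ioc fun _ hs =>
      intervalIntegral_lower_eq_integral_indicator hs,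
    setIntegral_congr_fun measurableSet_Ioc fun _ hθ =>
      intervalIntegral_upper_eq_integral_indicator hθ]
  exact integral_integral_swap (integrable_indicator_lowerTriangle hF)

end TriangleFubini

section BoundedKernel

variable {𝕜 E F X : Type*} [NontriviallyNormedField 𝕜] [NormedAddCommGroup E] [NormedSpace 𝕜 E]
  [NormedAddCommGroup F] [NormedSpace 𝕜 F] [TopologicalSpace X] [MeasurableSpace X]
  [OpensMeasurableSpace X]

theorem MeasureTheory.MemLp.continuousOn_clm_apply {μ : Measure X} {S : Set X} {p : ENNReal}
    {L : X → E →L[𝕜] F} {y : X → E} (hS : IsCompact S) (hSm : MeasurableSet S)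
    (hL : ContinuousOn L S) (hy : MemLp y p (μ.restrict S)) :
    MemLp (fun x => L x (y x)) p (μ.restrict S) := by
  obtain ⟨C, hC⟩ := hS.exists_bound_of_continuousOn hL
  refine hy.of_le_mul (c := C) ((continuous_fst.clm_apply continuous_snd).comp_aestronglyMeasurable
    ((hL.aestronglyMeasurable_of_isCompact hS hSm).prodMk hy.aestronglyMeasurable)) ?_
  filter_upwards [ae_restrict_mem hSm] with x hx
  exact (L x).le_of_opNorm_le (hC x hx) (y x)

lemma intervalIntegrable_clm_apply_of_continuousOn {a b s c d : ℝ} {κ : ℝ → ℝ → E →L[𝕜] F}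
    {y : ℝ → E} (hκ : ContinuousOn (uncurry κ) (Icc a b ×ˢ Icc a b))
    (hy : IntegrableOn y (Icc a b)) (hs : s ∈ Icc a b) (hc : c ∈ Icc a b) (hd : d ∈ Icc a b) :
    IntervalIntegrable (fun θ => κ s θ (y θ)) volume c d := by
  have hslice : ContinuousOn (κ s) (Icc a b) :=
    hκ.comp (Continuous.prodMk_right s).continuousOn fun _ hθ => ⟨hs, hθ⟩
  have hint := (memLp_one_iff_integrable.2 hy).continuousOn_clm_apply isCompact_Icc
    measurableSet_Icc hslice
  exact (IntegrableOn.mono_set (memLp_one_iff_integrable.1 hint)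
    (uIcc_subset_Icc hc hd)).intervalIntegrable

end BoundedKernel

section Volterra

variable {E F : Type*} [NormedAddCommGroup E] [NormedSpace ℝ E] [NormedAddCommGroup F]
  [NormedSpace ℝ F]

noncomputable def volterraLower (a : ℝ) (κ : ℝ → ℝ → E →L[ℝ] F) (y : ℝ → E) (s : ℝ) : F :=
  ∫ θ in a..s, κ s θ (y θ)

noncomputable def volterraUpper (b : ℝ) (κ : ℝ → ℝ → E →L[ℝ] F) (y : ℝ → E) (s : ℝ) : F :=
  ∫ θ in s..b, κ s θ (y θ)

end Volterra

section InnerProduct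

variable {E F : Type*} [NormedAddCommGroup E] [InnerProductSpace ℝ E]
  [NormedAddCommGroup F] [InnerProductSpace ℝ F]

theorem MeasureTheory.MemLp.integrable_inner {X : Type*} [MeasurableSpace X] {μ : Measure X}
    {f g : X → E} (hf : MemLp f 2 μ) (hg : MemLp g 2 μ) : Integrable (fun x => ⟪f x, g x⟫) μ :=
  memLp_one_iff_integrable.1 <| hf.of_bilin (fun u v => ⟪u, v⟫) 1 hg
    (hf.aestronglyMeasurable.inner hg.aestronglyMeasurable)
    (.of_forall fun _ => by simpa using nnnorm_inner_le_nnnorm _ _)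

theorem integrableOn_inner_clm_apply_prod {S T : Set ℝ} (hS : IsCompact S) (hT : IsCompact T)
    (hSm : MeasurableSet S) (hTm : MeasurableSet T) {κ : ℝ → ℝ → E →L[ℝ] F}
    (hκ : ContinuousOn (uncurry κ) (S ×ˢ T)) {y : ℝ → E} {g : ℝ → F}
    (hy : IntegrableOn y T) (hg : IntegrableOn g S) :
    IntegrableOn (fun z : ℝ × ℝ => ⟪κ z.1 z.2 (y z.2), g z.1⟫) (S ×ˢ T) := by
  obtain ⟨C, hC⟩ := (hS.prod hT).exists_bound_of_continuousOn hκ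
  have hvol : (volume.restrict S).prod (volume.restrict T) = volume.restrict (S ×ˢ T) := by
    rw [Measure.prod_restrict, ← Measure.volume_eq_prod]
  have hκm : AEStronglyMeasurable (uncurry κ) ((volume.restrict S).prod (volume.restrict T)) :=
    hvol ▸ hκ.aestronglyMeasurable_of_isCompact (hS.prod hT) (hSm.prod hTm)
  have hmem : ∀ᵐ z ∂(volume.restrict S).prod (volume.restrict T), z ∈ S ×ˢ T :=
    hvol ▸ ae_restrict_mem (hSm.prod hTm)
  rw [IntegrableOn, ← hvol]
  refine ((hg.norm.mul_prod hy.norm).const_mul C).mono' (((continuous_fst.clm_apply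
    continuous_snd).comp_aestronglyMeasurable (hκm.prodMk hy.1.comp_snd)).inner hg.1.comp_fst) ?_
  filter_upwards [hmem] with z hz
  calc ‖⟪κ z.1 z.2 (y z.2), g z.1⟫‖ ≤ ‖κ z.1 z.2 (y z.2)‖ * ‖g z.1‖ := norm_inner_le_norm _ _
    _ ≤ C * ‖y z.2‖ * ‖g z.1‖ := by gcongr; exact (κ z.1 z.2).le_of_opNorm_le (hC z hz) _
    _ = C * (‖g z.1‖ * ‖y z.2‖) := by ring

variable {a b : ℝ} {κ : ℝ → ℝ → E →L[ℝ] F} {y : ℝ → E} {g : ℝ → F}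

lemma integrableOn_inner_kernel_Ioc_prod (hκ : ContinuousOn (uncurry κ) (Icc a b ×ˢ Icc a b))
    (hy : IntegrableOn y (Icc a b)) (hg : IntegrableOn g (Icc a b)) :
    IntegrableOn (uncurry fun s θ => ⟪κ s θ (y θ), g s⟫) (Ioc a b ×ˢ Ioc a b) :=
  (integrableOn_inner_clm_apply_prod isCompact_Icc isCompact_Icc measurableSet_Icc
    measurableSet_Icc hκ hy hg).mono_set (prod_mono Ioc_subset_Icc_self Ioc_subset_Icc_self)

lemma inner_volterraLower [CompleteSpace F] (hκ : ContinuousOn (uncurry κ) (Icc a b ×ˢ Icc a b))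
    (hy : IntegrableOn y (Icc a b)) {s : ℝ} (hs : s ∈ Icc a b) :
    ⟪volterraLower a κ y s, g s⟫ = ∫ θ in a..s, ⟪κ s θ (y θ), g s⟫ :=
  ((innerSLFlip ℝ (g s)).intervalIntegral_comp_comm
    (intervalIntegrable_clm_apply_of_continuousOn hκ hy hs
      (left_mem_Icc.2 (hs.1.trans hs.2)) hs)).symm

theorem intervalIntegrable_inner_volterraLower [CompleteSpace F] (hab : a ≤ b)
    (hκ : ContinuousOn (uncurry κ) (Icc a b ×ˢ Icc a b)) (hy : IntegrableOn y (Icc a b))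
    (hg : IntegrableOn g (Icc a b)) :
    IntervalIntegrable (fun s => ⟪volterraLower a κ y s, g s⟫) volume a b :=
  (intervalIntegrable_congr fun _ hs => (inner_volterraLower hκ hy
    (uIcc_of_le hab ▸ uIoc_subset_uIcc hs)).symm).1 <|
      intervalIntegrable_intervalIntegral_lower hab (integrableOn_inner_kernel_Ioc_prod hκ hy hg)

end InnerProduct

section AdjointKernel

variable {E F : Type*} [NormedAddCommGroup E] [InnerProductSpace ℝ E] [CompleteSpace E]
  [NormedAddCommGroup F] [InnerProductSpace ℝ F] [CompleteSpace F]

noncomputable def adjointKernel (κ : ℝ → ℝ → E →L[ℝ] F) (s θ : ℝ) : F →L[ℝ] E :=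
  ContinuousLinearMap.adjoint (κ θ s)

variable {a b : ℝ} {κ : ℝ → ℝ → E →L[ℝ] F} {y : ℝ → E} {g : ℝ → F}

@[simp]
lemma adjointKernel_adjointKernel : adjointKernel (adjointKernel κ) = κ := by
  funext s θ
  exact ContinuousLinearMap.adjoint_adjoint _

lemma ContinuousOn.adjointKernel {S T : Set ℝ} (hκ : ContinuousOn (uncurry κ) (S ×ˢ T)) :
    ContinuousOn (uncurry (adjointKernel κ)) (T ×ˢ S) :=
  ContinuousLinearMap.adjoint.continuous.comp_continuousOn <|
    hκ.comp continuous_swap.continuousOn fun _ hz => ⟨hz.2, hz.1⟩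

lemma inner_volterraUpper_adjointKernel (hκ : ContinuousOn (uncurry κ) (Icc a b ×ˢ Icc a b))
    (hg : IntegrableOn g (Icc a b)) {θ : ℝ} (hθ : θ ∈ Icc a b) :
    ⟪y θ, volterraUpper b (adjointKernel κ) g θ⟫ = ∫ s in θ..b, ⟪κ s θ (y θ), g s⟫ := by
  have h := (innerSL ℝ (y θ)).intervalIntegral_comp_comm
    (intervalIntegrable_clm_apply_of_continuousOn hκ.adjointKernel hg hθ hθ
      (right_mem_Icc.2 (hθ.1.trans hθ.2)))
  simp only [innerSL_apply_apply, adjointKernel, ContinuousLinearMap.adjoint_inner_right] at h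
  exact h.symm

theorem intervalIntegrable_inner_volterraUpper_adjointKernel (hab : a ≤ b)
    (hκ : ContinuousOn (uncurry κ) (Icc a b ×ˢ Icc a b)) (hy : IntegrableOn y (Icc a b))
    (hg : IntegrableOn g (Icc a b)) :
    IntervalIntegrable (fun θ => ⟪y θ, volterraUpper b (adjointKernel κ) g θ⟫) volume a b :=
  (intervalIntegrable_congr fun _ hθ => (inner_volterraUpper_adjointKernel hκ hg
    (uIcc_of_le hab ▸ uIoc_subset_uIcc hθ)).symm).1 <|
      intervalIntegrable_intervalIntegral_upper hab (integrableOn_inner_kernel_Ioc_prod hκ hy hg)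

theorem integral_inner_volterraLower (hab : a ≤ b)
    (hκ : ContinuousOn (uncurry κ) (Icc a b ×ˢ Icc a b)) (hy : IntegrableOn y (Icc a b))
    (hg : IntegrableOn g (Icc a b)) :
    ∫ s in a..b, ⟪volterraLower a κ y s, g s⟫
      = ∫ s in a..b, ⟪y s, volterraUpper b (adjointKernel κ) g s⟫ := calc
  _ = ∫ s in a..b, ∫ θ in a..s, ⟪κ s θ (y θ), g s⟫ :=
    intervalIntegral.integral_congr fun _ hs => inner_volterraLower hκ hy (uIcc_of_le hab ▸ hs)
  _ = ∫ θ in a..b, ∫ s in θ..b, ⟪κ s θ (y θ), g s⟫ :=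
    intervalIntegral_integral_swap_triangle hab (integrableOn_inner_kernel_Ioc_prod hκ hy hg)
  _ = _ := intervalIntegral.integral_congr fun _ hθ =>
    (inner_volterraUpper_adjointKernel hκ hg (uIcc_of_le hab ▸ hθ)).symm

theorem intervalIntegrable_inner_volterraUpper (hab : a ≤ b)
    (hκ : ContinuousOn (uncurry κ) (Icc a b ×ˢ Icc a b)) (hy : IntegrableOn y (Icc a b))
    (hg : IntegrableOn g (Icc a b)) :
    IntervalIntegrable (fun s => ⟪volterraUpper b κ y s, g s⟫) volume a b := by
  simpa only [adjointKernel_adjointKernel, real_inner_comm (g _)] using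
    intervalIntegrable_inner_volterraUpper_adjointKernel hab hκ.adjointKernel hg hy

theorem intervalIntegrable_inner_volterraLower_adjointKernel (hab : a ≤ b)
    (hκ : ContinuousOn (uncurry κ) (Icc a b ×ˢ Icc a b)) (hy : IntegrableOn y (Icc a b))
    (hg : IntegrableOn g (Icc a b)) :
    IntervalIntegrable (fun s => ⟪y s, volterraLower a (adjointKernel κ) g s⟫) volume a b := by
  simpa only [real_inner_comm (y _)] using
    intervalIntegrable_inner_volterraLower hab hκ.adjointKernel hg hy

theorem integral_inner_volterraUpper (hab : a ≤ b)
    (hκ : ContinuousOn (uncurry κ) (Icc a b ×ˢ Icc a b)) (hy : IntegrableOn y (Icc a b))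
    (hg : IntegrableOn g (Icc a b)) :
    ∫ s in a..b, ⟪volterraUpper b κ y s, g s⟫
      = ∫ s in a..b, ⟪y s, volterraLower a (adjointKernel κ) g s⟫ := by
  simpa only [adjointKernel_adjointKernel, real_inner_comm (g _), real_inner_comm (y _)] using
    (integral_inner_volterraLower hab hκ.adjointKernel hg hy).symm

end AdjointKernel

section MatrixKernel

noncomputable def mulVecCLM (n m : ℕ) :
    Matrix (Fin n) (Fin m) ℝ →L[ℝ] EuclideanSpace ℝ (Fin m) →L[ℝ] EuclideanSpace ℝ (Fin n) :=
  LinearMap.toContinuousLinearMap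
    (LinearMap.toContinuousLinearMap.toLinearMap ∘ₗ Matrix.toEuclideanLin.toLinearMap)

variable {n m : ℕ}

lemma mulVecCLM_apply (A : Matrix (Fin n) (Fin m) ℝ) (v : EuclideanSpace ℝ (Fin m)) :
    mulVecCLM n m A v = mulVecE A v :=
  rfl

lemma inner_mulVecE (A : Matrix (Fin n) (Fin m) ℝ) (v : EuclideanSpace ℝ (Fin m))
    (w : EuclideanSpace ℝ (Fin n)) : ⟪mulVecE A v, w⟫ = ⟪v, mulVecE Aᵀ w⟫ := by
  simp [mulVecE, EuclideanSpace.inner_eq_star_dotProduct, dotProduct_mulVec, mulVec_transpose]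

lemma adjoint_mulVecCLM (A : Matrix (Fin n) (Fin m) ℝ) :
    ContinuousLinearMap.adjoint (mulVecCLM n m A) = mulVecCLM m n Aᵀ :=
  ((ContinuousLinearMap.eq_adjoint_iff _ _).2 fun w v => by
    simpa only [mulVecCLM_apply, transpose_transpose] using inner_mulVecE Aᵀ w v).symm

lemma adjointKernel_mulVecCLM (N : ℝ → ℝ → Matrix (Fin n) (Fin m) ℝ) :
    adjointKernel (fun s θ => mulVecCLM n m (N s θ)) = fun s θ => mulVecCLM m n (N θ s)ᵀ := by
  funext s θ
  exact adjoint_mulVecCLM _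

variable {a b : ℝ} (N₀ : ℝ → Matrix (Fin n) (Fin m) ℝ) (N₁ N₂ : ℝ → ℝ → Matrix (Fin n) (Fin m) ℝ)

lemma threePI_eq (y : ℝ → EuclideanSpace ℝ (Fin m)) (s : ℝ) :
    threePI a b N₀ N₁ N₂ y s = mulVecCLM n m (N₀ s) (y s)
      + volterraLower a (fun s θ => mulVecCLM n m (N₁ s θ)) y s
      + volterraUpper b (fun s θ => mulVecCLM n m (N₂ s θ)) y s :=
  rfl

lemma threePI_transpose_eq (g : ℝ → EuclideanSpace ℝ (Fin n)) (s : ℝ) :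
    threePI a b (fun s => (N₀ s)ᵀ) (fun s θ => (N₂ θ s)ᵀ) (fun s θ => (N₁ θ s)ᵀ) g s
      = ContinuousLinearMap.adjoint (mulVecCLM n m (N₀ s)) (g s)
        + volterraLower a (adjointKernel fun s θ => mulVecCLM n m (N₂ s θ)) g s
        + volterraUpper b (adjointKernel fun s θ => mulVecCLM n m (N₁ s θ)) g s := by
  simp only [adjointKernel_mulVecCLM, adjoint_mulVecCLM]
  rfl

end MatrixKernel

/-- The adjoint of a 3-PI operator with respect to the `L²` inner product is the 3-PI
operator with parameters `N̂₀(s) = N₀(s)ᵀ`, `N̂₁(s,θ) = N₂(θ,s)ᵀ`, `N̂₂(s,θ) = N₁(θ,s)ᵀ`: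
`⟨P_{N₀,N₁,N₂} y, g⟩_{L²} = ⟨y, P_{N̂₀,N̂₁,N̂₂} g⟩_{L²}`. -/
theorem threePI_adjoint {n m : ℕ} {a b : ℝ} (hab : a < b)
    (N₀ : ℝ → Matrix (Fin n) (Fin m) ℝ)
    (N₁ N₂ : ℝ → ℝ → Matrix (Fin n) (Fin m) ℝ)
    (hN₀ : ContinuousOn N₀ (Icc a b))
    (hN₁ : ContinuousOn (fun z : ℝ × ℝ => N₁ z.1 z.2) (Icc a b ×ˢ Icc a b))
    (hN₂ : ContinuousOn (fun z : ℝ × ℝ => N₂ z.1 z.2) (Icc a b ×ˢ Icc a b))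
    (y : ℝ → EuclideanSpace ℝ (Fin m)) (g : ℝ → EuclideanSpace ℝ (Fin n))
    (hy : MemLp y 2 (volume.restrict (Icc a b)))
    (hg : MemLp g 2 (volume.restrict (Icc a b))) :
    ∫ s in a..b, ⟪threePI a b N₀ N₁ N₂ y s, g s⟫
      = ∫ s in a..b, ⟪y s, threePI a b (fun s => (N₀ s)ᵀ)
          (fun s θ => (N₂ θ s)ᵀ) (fun s θ => (N₁ θ s)ᵀ) g s⟫ := by
  have hyI : IntegrableOn y (Icc a b) := hy.integrable one_le_two
  have hgI : IntegrableOn g (Icc a b) := hg.integrable one_le_two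
  have hκ₁ : ContinuousOn (uncurry fun s θ => mulVecCLM n m (N₁ s θ)) (Icc a b ×ˢ Icc a b) :=
    (mulVecCLM n m).continuous.comp_continuousOn hN₁
  have hκ₂ : ContinuousOn (uncurry fun s θ => mulVecCLM n m (N₂ s θ)) (Icc a b ×ˢ Icc a b) :=
    (mulVecCLM n m).continuous.comp_continuousOn hN₂
  have h₀ : IntervalIntegrable (fun s => ⟪mulVecCLM n m (N₀ s) (y s), g s⟫) volume a b :=
    (intervalIntegrable_iff_integrableOn_Icc_of_le hab.le).2 <|
      (hy.continuousOn_clm_apply isCompact_Icc measurableSet_Icc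
        ((mulVecCLM n m).continuous.comp_continuousOn hN₀)).integrable_inner hg
  have hL₁ := intervalIntegrable_inner_volterraLower hab.le hκ₁ hyI hgI
  have hU₂ := intervalIntegrable_inner_volterraUpper hab.le hκ₂ hyI hgI
  have hL₂ := intervalIntegrable_inner_volterraLower_adjointKernel hab.le hκ₂ hyI hgI
  have hU₁ := intervalIntegrable_inner_volterraUpper_adjointKernel hab.le hκ₁ hyI hgI
  simp only [threePI_transpose_eq]
  simp only [threePI_eq, inner_add_left, inner_add_right, ContinuousLinearMap.adjoint_inner_right]
  rw [intervalIntegral.integral_add (h₀.add hL₁) hU₂, intervalIntegral.integral_add h₀ hL₁,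
    intervalIntegral.integral_add (h₀.add hL₂) hU₁, intervalIntegral.integral_add h₀ hL₂,
    integral_inner_volterraLower hab.le hκ₁ hyI hgI,
    integral_inner_volterraUpper hab.le hκ₂ hyI hgI]
  ring
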